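/- arXiv:2009.10154 — 8 statements merged into one kernel-verified Lean document; each statement's English description precedes it below -/
import Mathlib

section
/- Let g be a finite-dimensional nilpotent Lie algebra over a field K. Define subspaces F_i of the dual space g* recursively by F_0 = 0 and, for i ≥ 0, F_{i+1} = { θ ∈ g* : for every X ∈ g such that φ(X) = 0 for all φ ∈ F_i, one has θ(⁅X,Y⁆) = 0 for all Y ∈ g } (this condition expresses, in finite dimension, that the Chevalley–Eilenberg differential d_g θ = −θ∘⁅·,·⁆ lies in Λ²F_i). Then for every i ≥ 0, F_i equals the dual annihilator of the i-th term of the lower central series: F_i = { θ ∈ g* : θ(X) = 0 for all X ∈ g^(i) }. -/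
/-!
Over a field a subspace is the common kernel of its annihilator, so once `F i` is the annihilator
of `g^(i)`, the vectors killed by every `φ ∈ F i` are exactly those of `g^(i)`. The condition
defining `F (i + 1)` then says that `θ` vanishes on the brackets `⁅g^(i), g⁆`, which span
`g^(i + 1)`.
-/

theorem LieSubmodule.mem_dualAnnihilator_top_lie_iff {R L M : Type*} [CommRing R] [LieRing L]
    [LieAlgebra R L] [AddCommGroup M] [Module R M] [LieRingModule L M] [LieModule R L M]
    (N : LieSubmodule R L M) (θ : Module.Dual R M) :
    θ ∈ (⁅(⊤ : LieIdeal R L), N⁆.toSubmodule).dualAnnihilator ↔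
      ∀ x : L, ∀ m ∈ N, θ ⁅x, m⁆ = 0 := by
  rw [Submodule.mem_dualAnnihilator, lieIdeal_oper_eq_linear_span']
  change Submodule.span R _ ≤ LinearMap.ker θ ↔ _
  rw [Submodule.span_le]
  simp only [LieSubmodule.mem_top, true_and, Set.subset_def, Set.mem_ofPred_eq, SetLike.mem_coe,
    LinearMap.mem_ker, forall_exists_index, and_imp]
  exact ⟨fun h x m hm ↦ h _ x m hm rfl, by rintro h _ x m hm rfl; exact h x m hm⟩

theorem LieAlgebra.mem_dualAnnihilator_lowerCentralSeries_succ_iff {R L : Type*} [CommRing R]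
    [LieRing L] [LieAlgebra R L] (k : ℕ) (θ : Module.Dual R L) :
    θ ∈ (LieModule.lowerCentralSeries R L L (k + 1)).toSubmodule.dualAnnihilator ↔
      ∀ X ∈ LieModule.lowerCentralSeries R L L k, ∀ Y : L, θ ⁅X, Y⁆ = 0 := by
  rw [LieModule.lowerCentralSeries_succ, LieSubmodule.mem_dualAnnihilator_top_lie_iff]
  have skew (X Y : L) : θ ⁅Y, X⁆ = 0 ↔ θ ⁅X, Y⁆ = 0 := by rw [← lie_skew, map_neg, neg_eq_zero]
  exact ⟨fun h X hX Y ↦ (skew X Y).1 (h Y X hX), fun h Y X hX ↦ (skew X Y).2 (h X hX Y)⟩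

theorem rumin_filtration_eq_annihilator_lowerCentralSeries_general
    {K : Type*} [Field K] {g : Type*} [LieRing g] [LieAlgebra K g]
    (F : ℕ → Set (Module.Dual K g))
    (hF0 : ∀ θ : Module.Dual K g, θ ∈ F 0 ↔ θ = 0)
    (hFsucc : ∀ i : ℕ, ∀ θ : Module.Dual K g,
      θ ∈ F (i + 1) ↔
        ∀ X : g, (∀ φ ∈ F i, φ X = 0) → ∀ Y : g, θ ⁅X, Y⁆ = 0) :
    ∀ i : ℕ, ∀ θ : Module.Dual K g,
      θ ∈ F i ↔ ∀ X ∈ LieModule.lowerCentralSeries K g g i, θ X = 0 := by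
  suffices h : ∀ i, F i = (LieModule.lowerCentralSeries K g g i).toSubmodule.dualAnnihilator by
    intro i θ
    rw [h i]
    exact Submodule.mem_dualAnnihilator θ
  intro i
  induction i with
  | zero =>
    ext θ
    simp [hF0]
  | succ i ih =>
    ext θ
    rw [SetLike.mem_coe, LieAlgebra.mem_dualAnnihilator_lowerCentralSeries_succ_iff, hFsucc, ih]
    simp_rw [SetLike.mem_coe, Subspace.forall_mem_dualAnnihilator_apply_eq_zero_iff]
    rfl

/-- For a finite-dimensional nilpotent Lie algebra `g` over a field `K`,
the recursively defined filtration `F` of the dual space (with `F 0 = 0` and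
`F (i+1)` the set of covectors whose Chevalley–Eilenberg differential lies in `Λ² (F i)`,
expressed by the pairing condition below) coincides with the dual annihilators of the
lower central series: `F i = {θ : θ(X) = 0 for all X ∈ g^(i)}`. -/
theorem rumin_filtration_eq_annihilator_lowerCentralSeries
    {K : Type*} [Field K] {g : Type*} [LieRing g] [LieAlgebra K g]
    [FiniteDimensional K g] [LieRing.IsNilpotent g]
    (F : ℕ → Set (Module.Dual K g))
    (hF0 : ∀ θ : Module.Dual K g, θ ∈ F 0 ↔ θ = 0)
    (hFsucc : ∀ i : ℕ, ∀ θ : Module.Dual K g,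
      θ ∈ F (i + 1) ↔
        ∀ X : g, (∀ φ ∈ F i, φ X = 0) → ∀ Y : g, θ ⁅X, Y⁆ = 0) :
    ∀ i : ℕ, ∀ θ : Module.Dual K g,
      θ ∈ F i ↔ ∀ X ∈ LieModule.lowerCentralSeries K g g i, θ X = 0 :=
  rumin_filtration_eq_annihilator_lowerCentralSeries_general F hF0 hFsucc
end

section
/- For every α in the range of d₀⁻¹ one has P(d₀⁻¹(d α)) = α; i.e. the operator P := Σ_{k=0}^{N} (−1)^k D^k is an inverse of d₀⁻¹ ∘ d on the range of d₀⁻¹. -/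
/-!
Write `α = d₀⁻¹ v`. Since `d₀⁻¹` kills `(range d₀)ᗮ`, it factors through the projection onto
`range d₀`, which is `d₀ ∘ d₀⁻¹`; hence `d₀⁻¹ d₀ α = α` and `d₀⁻¹ d α = α + D α = (1 + D) α`.
As `D` is nilpotent, the truncated geometric series `P` is a left inverse of `1 + D`.
-/

open Finset

theorem geom_sum_neg_mul_one_add_of_pow_eq_zero {R : Type*} [Ring R] {a : R} {n : ℕ}
    (ha : a ^ n = 0) : (∑ k ∈ range n, (-a) ^ k) * (1 + a) = 1 := by
  have hneg : (-a) ^ n = 0 := by rw [neg_pow, ha, mul_zero]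
  simpa [hneg] using geom_sum_mul_neg (-a) n

theorem sum_neg_one_pow_smul_pow {R A : Type*} [Ring R] [Ring A] [Module R A]
    [IsScalarTower R A A] [SMulCommClass R A A] (a : A) (n : ℕ) :
    ∑ k ∈ range n, (-1 : R) ^ k • a ^ k = ∑ k ∈ range n, (-a) ^ k := by
  simp only [← smul_pow, neg_one_smul]

namespace Submodule

variable {𝕜 E F : Type*} [RCLike 𝕜] [NormedAddCommGroup E] [InnerProductSpace 𝕜 E]
  [AddCommGroup F] [Module 𝕜 F]

theorem map_starProjection_of_orthogonal_le_ker (K : Submodule 𝕜 E) [K.HasOrthogonalProjection]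
    {f : E →ₗ[𝕜] F} (hf : Kᗮ ≤ LinearMap.ker f) (v : E) : f (K.starProjection v) = f v := by
  have hzero : f (v - K.starProjection v) = 0 := hf (K.sub_starProjection_mem_orthogonal v)
  rw [map_sub, sub_eq_zero] at hzero
  exact hzero.symm

end Submodule

theorem P_is_inverse_of_partialInverse_comp_d_on_range_general
    {V : Type*} [NormedAddCommGroup V] [InnerProductSpace ℝ V] [FiniteDimensional ℝ V]
    (d₀ dinv : V →ₗ[ℝ] V)
    (hpinv₁ : (LinearMap.range d₀)ᗮ ≤ LinearMap.ker dinv)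
    (hpinv₃ : ∀ v : V, d₀ (dinv v) = (Submodule.orthogonalProjectionOnto (LinearMap.range d₀) v : V))
    (d : V →ₗ[ℝ] V)
    (D : V →ₗ[ℝ] V) (hD : D = dinv ∘ₗ (d - d₀))
    (N : ℕ) (hDnil : D ^ (N + 1) = 0)
    (P : V →ₗ[ℝ] V) (hP : P = ∑ k ∈ Finset.range (N + 1), ((-1 : ℝ)) ^ k • D ^ k) :
    ∀ α ∈ LinearMap.range dinv, P (dinv (d α)) = α := by
  rintro α ⟨v, rfl⟩
  have hfix : dinv (d₀ (dinv v)) = dinv v := by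
    rw [hpinv₃]
    exact (LinearMap.range d₀).map_starProjection_of_orthogonal_le_ker hpinv₁ v
  have hstep : dinv (d (dinv v)) = (1 + D) (dinv v) := by
    rw [hD, LinearMap.add_apply, LinearMap.comp_apply, LinearMap.sub_apply, map_sub, hfix,
      Module.End.one_apply]
    abel
  have hleft : P * (1 + D) = 1 := by
    rw [hP, sum_neg_one_pow_smul_pow]
    exact geom_sum_neg_mul_one_add_of_pow_eq_zero hDnil
  rw [hstep, ← Module.End.mul_apply, hleft, Module.End.one_apply]

/-- The operator `P := Σ_{k=0}^{N} (−1)^k D^k` inverts `d₀⁻¹ ∘ d`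
on the range of `d₀⁻¹`. -/
theorem P_is_inverse_of_partialInverse_comp_d_on_range
    {V : Type*} [NormedAddCommGroup V] [InnerProductSpace ℝ V] [FiniteDimensional ℝ V]
    (d₀ dinv : V →ₗ[ℝ] V) (hd₀ : d₀ ∘ₗ d₀ = 0)
    (hpinv₁ : (LinearMap.range d₀)ᗮ ≤ LinearMap.ker dinv)
    (hpinv₂ : LinearMap.range dinv ≤ (LinearMap.ker d₀)ᗮ)
    (hpinv₃ : ∀ v : V, d₀ (dinv v) = (Submodule.orthogonalProjectionOnto (LinearMap.range d₀) v : V))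
    (d : V →ₗ[ℝ] V) (hd : d ∘ₗ d = 0)
    (D : V →ₗ[ℝ] V) (hD : D = dinv ∘ₗ (d - d₀))
    (N : ℕ) (hDnil : D ^ (N + 1) = 0)
    (P : V →ₗ[ℝ] V) (hP : P = ∑ k ∈ Finset.range (N + 1), ((-1 : ℝ)) ^ k • D ^ k) :
    ∀ α ∈ LinearMap.range dinv, P (dinv (d α)) = α :=
  P_is_inverse_of_partialInverse_comp_d_on_range_general d₀ dinv hpinv₁ hpinv₃ d D hD N hDnil P hP
end

section
/- The operator Π_E := id − Q ∘ d − d ∘ Q is idempotent: Π_E ∘ Π_E = Π_E. -/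
/-!
Write `h` for the partial inverse `d₀⁻¹`. Its defining properties give `h h = 0` and `h d₀ h = h`.
Since `D = h (d - d₀)`, the second one says `h d = h d₀ (1 + D)`, and since `P = (1 + D)⁻¹`
we get `h P = h` and `h d P = h d₀`. Hence `Q = P h` satisfies `Q Q = 0` and `Q d Q = Q`, which
together with `d d = 0` is all that idempotence of `1 - Q d - d Q` requires.
-/

open LinearMap Submodule

section PartialInverse

variable {𝕜 E : Type*} [RCLike 𝕜] [NormedAddCommGroup E] [InnerProductSpace 𝕜 E]
  {d₀ h : E →ₗ[𝕜] E}

theorem comp_self_eq_zero_of_orthogonal (hd₀ : d₀ ∘ₗ d₀ = 0) (h₁ : (range d₀)ᗮ ≤ ker h)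
    (h₂ : range h ≤ (ker d₀)ᗮ) : h ∘ₗ h = 0 :=
  range_le_ker_iff.mp <| h₂.trans <| (orthogonal_le (range_le_ker_iff.mpr hd₀)).trans h₁

theorem comp_comp_self_eq_of_orthogonalProjection [(range d₀).HasOrthogonalProjection]
    (h₃ : ∀ v, d₀ (h v) = ((range d₀).orthogonalProjectionOnto v : E)) :
    d₀ ∘ₗ h ∘ₗ d₀ = d₀ := by
  ext v
  simpa [h₃] using congrArg Subtype.val
    ((range d₀).orthogonalProjectionOnto_mem_subspace_eq_self ⟨d₀ v, mem_range_self d₀ v⟩)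

theorem comp_comp_self_eq_of_range_le_orthogonal_ker (hd₀h : d₀ ∘ₗ h ∘ₗ d₀ = d₀)
    (h₂ : range h ≤ (ker d₀)ᗮ) : h ∘ₗ d₀ ∘ₗ h = h := by
  ext v
  rw [← sub_eq_zero]
  refine disjoint_def.mp (orthogonal_disjoint (ker d₀)) _ ?_ ?_
  · simpa [sub_eq_zero] using congrArg (· (h v)) hd₀h
  · exact sub_mem (h₂ (mem_range_self h _)) (h₂ (mem_range_self h v))

end PartialInverse

section Ring

variable {R : Type*} [Ring R]

theorem one_add_mul_geom_sum_neg_of_pow_eq_zero {D : R} {N : ℕ} (hD : D ^ (N + 1) = 0) :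
    (1 + D) * ∑ k ∈ Finset.range (N + 1), (-D) ^ k = 1 := by
  have := mul_neg_geom_sum (-D) (N + 1)
  rwa [sub_neg_eq_add, neg_pow D, hD, mul_zero, sub_zero] at this

theorem isIdempotentElem_one_sub_mul_sub_mul {d Q : R} (hd : d * d = 0) (hQ : Q * Q = 0)
    (hQdQ : Q * d * Q = Q) : IsIdempotentElem (1 - Q * d - d * Q) := by
  have expand : (1 - Q * d - d * Q) * (1 - Q * d - d * Q)
      = 1 - Q * d - d * Q - Q * d + (Q * d * Q) * d + Q * (d * d) * Q
        - d * Q + d * (Q * Q) * d + d * (Q * d * Q) := by noncomm_ring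
  rw [IsIdempotentElem, expand, hQdQ, hQ, hd]
  noncomm_ring

variable {h d₀ d P : R} (hd₀h : h * d₀ * h = h) (hP : (1 + h * (d - d₀)) * P = 1)
include hP

theorem mul_eq_self_of_one_add_mul_mul_eq_one (hh : h * h = 0) : h * P = h := by
  have : h * ((1 + h * (d - d₀)) * P) = h * P + h * h * (d - d₀) * P := by noncomm_ring
  rwa [hP, mul_one, hh, zero_mul, zero_mul, add_zero, eq_comm] at this

include hd₀h in
theorem mul_mul_eq_of_one_add_mul_mul_eq_one : h * d * P = h * d₀ := by
  have factor : h * d = h * d₀ * (1 + h * (d - d₀)) := by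
    rw [mul_add, ← mul_assoc, hd₀h]
    noncomm_ring
  rw [factor, mul_assoc, hP, mul_one]

theorem mul_mul_self_eq_zero_of_one_add_mul_mul_eq_one (hh : h * h = 0) :
    P * h * (P * h) = 0 := by
  rw [mul_assoc, ← mul_assoc h, mul_eq_self_of_one_add_mul_mul_eq_one hP hh, hh, mul_zero]

include hd₀h in
theorem mul_mul_mul_mul_eq_of_one_add_mul_mul_eq_one : P * h * d * (P * h) = P * h := by
  calc P * h * d * (P * h) = P * (h * d * P) * h := by noncomm_ring
    _ = P * (h * d₀ * h) := by rw [mul_mul_eq_of_one_add_mul_mul_eq_one hd₀h hP, mul_assoc P]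
    _ = P * h := by rw [hd₀h]

end Ring

/-- The operator `Π_E := id − Q ∘ d − d ∘ Q` is idempotent:
`Π_E ∘ Π_E = Π_E`. -/
theorem PiE_idempotent
    {V : Type*} [NormedAddCommGroup V] [InnerProductSpace ℝ V] [FiniteDimensional ℝ V]
    (d₀ dinv : V →ₗ[ℝ] V) (hd₀ : d₀ ∘ₗ d₀ = 0)
    (hpinv₁ : (LinearMap.range d₀)ᗮ ≤ LinearMap.ker dinv)
    (hpinv₂ : LinearMap.range dinv ≤ (LinearMap.ker d₀)ᗮ)
    (hpinv₃ : ∀ v : V, d₀ (dinv v) = (Submodule.orthogonalProjectionOnto (LinearMap.range d₀) v : V))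
    (d : V →ₗ[ℝ] V) (hd : d ∘ₗ d = 0)
    (D : V →ₗ[ℝ] V) (hD : D = dinv ∘ₗ (d - d₀))
    (N : ℕ) (hDnil : D ^ (N + 1) = 0)
    (P : V →ₗ[ℝ] V) (hP : P = ∑ k ∈ Finset.range (N + 1), ((-1 : ℝ)) ^ k • D ^ k)
    (Q : V →ₗ[ℝ] V) (hQ : Q = P ∘ₗ dinv)
    (PiE : V →ₗ[ℝ] V) (hPiE : PiE = LinearMap.id - Q ∘ₗ d - d ∘ₗ Q) :
    PiE ∘ₗ PiE = PiE := by
  have hh : dinv * dinv = 0 := comp_self_eq_zero_of_orthogonal hd₀ hpinv₁ hpinv₂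
  have hd₀h : dinv * d₀ * dinv = dinv := comp_comp_self_eq_of_range_le_orthogonal_ker
    (comp_comp_self_eq_of_orthogonalProjection hpinv₃) hpinv₂
  have hPinv : (1 + dinv * (d - d₀)) * P = 1 := by
    have hP' : P = ∑ k ∈ Finset.range (N + 1), (-D) ^ k := by
      simp only [hP, ← smul_pow, neg_one_smul]
    have := one_add_mul_geom_sum_neg_of_pow_eq_zero hDnil
    rwa [← hP', hD] at this
  subst hQ hPiE
  exact isIdempotentElem_one_sub_mul_sub_mul hd
    (mul_mul_self_eq_zero_of_one_add_mul_mul_eq_one hPinv hh)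
    (mul_mul_mul_mul_eq_of_one_add_mul_mul_eq_one hd₀h hPinv)
end

section
/- The fixed-point set of Π_E admits the following description: { α ∈ V : Q(d α) + d(Q α) = 0 } = { α ∈ V : d₀⁻¹(d α) = 0 and d₀⁻¹ α = 0 }; equivalently, E := { α : Π_E α = α } equals ker d₀⁻¹ ∩ ker(d₀⁻¹ ∘ d). -/
/-!
On `range d₀⁻¹` the map `d₀⁻¹ d₀` is the identity, so there `1 + D` agrees with `d₀⁻¹ d`.
Moreover `P = (1 + D)⁻¹` preserves `range d₀⁻¹`, which `d₀⁻¹` kills because `d₀² = 0`.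
Applying `d₀⁻¹` to `Q d α + d Q α = 0` therefore gives `(1 + D) (Q α) = d₀⁻¹ d (Q α) = 0`,
hence `Q α = 0` and then `Q d α = 0`; invertibility of `P` turns these into `d₀⁻¹ α = 0` and
`d₀⁻¹ d α = 0`.
-/

open LinearMap Submodule

theorem one_add_mul_sum_neg_one_pow_smul_pow_eq_one {R A : Type*} [CommRing R] [Ring A]
    [Algebra R A] {a : A} {n : ℕ} (ha : a ^ n = 0) :
    (1 + a) * ∑ k ∈ Finset.range n, (-1 : R) ^ k • a ^ k = 1 ∧
      (∑ k ∈ Finset.range n, (-1 : R) ^ k • a ^ k) * (1 + a) = 1 := by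
  have hneg : ∀ k, (-1 : R) ^ k • a ^ k = (-a) ^ k := fun k => by
    rw [← smul_pow, neg_one_smul]
  have hn : (-a) ^ n = 0 := by rw [← hneg, ha, smul_zero]
  simp only [hneg, ← sub_neg_eq_add (1 : A) a, mul_neg_geom_sum, geom_sum_mul_neg, hn,
    sub_zero, and_self]

structure IsPartialInverse {𝕜 E : Type*} [RCLike 𝕜] [NormedAddCommGroup E]
    [InnerProductSpace 𝕜 E] (d₀ dinv : E →ₗ[𝕜] E) [(range d₀).HasOrthogonalProjection] :
    Prop where
  orthogonal_range_le_ker : (range d₀)ᗮ ≤ ker dinv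
  range_le_orthogonal_ker : range dinv ≤ (ker d₀)ᗮ
  apply_apply_eq_starProjection : ∀ v, d₀ (dinv v) = (range d₀).starProjection v

namespace IsPartialInverse

variable {𝕜 E : Type*} [RCLike 𝕜] [NormedAddCommGroup E] [InnerProductSpace 𝕜 E]
  {d₀ dinv : E →ₗ[𝕜] E} [(range d₀).HasOrthogonalProjection]

theorem comp_self_eq_zero (h : IsPartialInverse d₀ dinv) (hd₀ : d₀ ∘ₗ d₀ = 0) :
    dinv ∘ₗ dinv = 0 := by
  have hrange : range d₀ ≤ ker d₀ := range_le_ker_iff.mpr hd₀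
  ext v
  exact h.orthogonal_range_le_ker (orthogonal_le hrange (h.range_le_orthogonal_ker ⟨v, rfl⟩))

theorem comp_comp_self (h : IsPartialInverse d₀ dinv) : dinv ∘ₗ d₀ ∘ₗ dinv = dinv := by
  ext v
  have hmem : v - d₀ (dinv v) ∈ ker dinv := by
    rw [h.apply_apply_eq_starProjection]
    exact h.orthogonal_range_le_ker ((range d₀).sub_starProjection_mem_orthogonal v)
  rw [mem_ker, map_sub, sub_eq_zero] at hmem
  exact hmem.symm

end IsPartialInverse

section PerturbedHomotopy

variable {R M : Type*} [Ring R] [AddCommGroup M] [Module R M] {d₀ dinv d P : Module.End R M}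

theorem apply_mem_range_of_mem_range (hPD : (1 + dinv ∘ₗ (d - d₀)) * P = 1) {y : M}
    (hy : y ∈ range dinv) : P y ∈ range dinv := by
  have hPy : P y = y - dinv ((d - d₀) (P y)) :=
    eq_sub_of_add_eq (LinearMap.congr_fun hPD y)
  rw [hPy]
  exact sub_mem hy (mem_range_self _ _)

theorem one_add_apply_of_mem_range (hproj : dinv ∘ₗ d₀ ∘ₗ dinv = dinv) {y : M}
    (hy : y ∈ range dinv) : (1 + dinv ∘ₗ (d - d₀)) y = dinv (d y) := by
  obtain ⟨z, rfl⟩ := hy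
  have hz : dinv (d₀ (dinv z)) = dinv z := LinearMap.congr_fun hproj z
  simp only [LinearMap.add_apply, Module.End.one_apply, comp_apply, LinearMap.sub_apply, map_sub,
    hz, add_sub_cancel]

theorem anticommutator_perturbedHomotopy_apply_eq_zero_iff (hdinv : dinv ∘ₗ dinv = 0)
    (hproj : dinv ∘ₗ d₀ ∘ₗ dinv = dinv) (hPD : (1 + dinv ∘ₗ (d - d₀)) * P = 1)
    (hDP : P * (1 + dinv ∘ₗ (d - d₀)) = 1) (α : M) :
    P (dinv (d α)) + d (P (dinv α)) = 0 ↔ dinv (d α) = 0 ∧ dinv α = 0 := by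
  have hP_inj : Function.Injective P := injective_of_comp_eq_id P _ hPD
  have hD_inj : Function.Injective ⇑(1 + dinv ∘ₗ (d - d₀) : Module.End R M) :=
    injective_of_comp_eq_id _ P hDP
  have hQ_range : ∀ x, P (dinv x) ∈ range dinv := fun x =>
    apply_mem_range_of_mem_range hPD (mem_range_self dinv x)
  have hdinvQ : ∀ x, dinv (P (dinv x)) = 0 := fun x => by
    obtain ⟨z, hz⟩ := hQ_range x
    rw [← hz]
    exact LinearMap.congr_fun hdinv z
  constructor
  · intro h
    have hdQ : dinv (d (P (dinv α))) = 0 := by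
      simpa only [map_add, hdinvQ, zero_add, map_zero] using congrArg dinv h
    have hQα : P (dinv α) = 0 := hD_inj <| by
      rw [one_add_apply_of_mem_range hproj (hQ_range α), hdQ, map_zero]
    have hQdα : P (dinv (d α)) = 0 := by rwa [hQα, map_zero, add_zero] at h
    exact ⟨hP_inj (hQdα.trans (map_zero P).symm), hP_inj (hQα.trans (map_zero P).symm)⟩
  · rintro ⟨hdα, hα⟩
    rw [hdα, hα, map_zero, map_zero, add_zero]

end PerturbedHomotopy

theorem fixedPoints_PiE_eq_ker_inter_ker_general
    {V : Type*} [NormedAddCommGroup V] [InnerProductSpace ℝ V] [FiniteDimensional ℝ V]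
    (d₀ dinv : V →ₗ[ℝ] V) (hd₀ : d₀ ∘ₗ d₀ = 0)
    (hpinv₁ : (LinearMap.range d₀)ᗮ ≤ LinearMap.ker dinv)
    (hpinv₂ : LinearMap.range dinv ≤ (LinearMap.ker d₀)ᗮ)
    (hpinv₃ : ∀ v : V, d₀ (dinv v) = (Submodule.orthogonalProjectionOnto (LinearMap.range d₀) v : V))
    (d : V →ₗ[ℝ] V)
    (D : V →ₗ[ℝ] V) (hD : D = dinv ∘ₗ (d - d₀))
    (N : ℕ) (hDnil : D ^ (N + 1) = 0)
    (P : V →ₗ[ℝ] V) (hP : P = ∑ k ∈ Finset.range (N + 1), ((-1 : ℝ)) ^ k • D ^ k)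
    (Q : V →ₗ[ℝ] V) (hQ : Q = P ∘ₗ dinv)
    (PiE : V →ₗ[ℝ] V) (hPiE : PiE = LinearMap.id - Q ∘ₗ d - d ∘ₗ Q) :
    {α : V | Q (d α) + d (Q α) = 0} =
      {α : V | dinv (d α) = 0 ∧ dinv α = 0} ∧
    {α : V | PiE α = α} =
      ↑(LinearMap.ker dinv ⊓ LinearMap.ker (dinv ∘ₗ d)) := by
  have hpinv : IsPartialInverse d₀ dinv := ⟨hpinv₁, hpinv₂, hpinv₃⟩
  obtain ⟨hPD, hDP⟩ := one_add_mul_sum_neg_one_pow_smul_pow_eq_one (R := ℝ) hDnil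
  subst hD hQ hPiE
  rw [← hP] at hPD hDP
  have key := anticommutator_perturbedHomotopy_apply_eq_zero_iff
    (hpinv.comp_self_eq_zero hd₀) hpinv.comp_comp_self hPD hDP
  refine ⟨Set.ext key, Set.ext fun α => ?_⟩
  simp only [Set.mem_ofPred_eq, SetLike.mem_coe, mem_inf, mem_ker, comp_apply,
    LinearMap.sub_apply, id_apply, sub_sub, sub_eq_self]
  exact (key α).trans and_comm

/-- The fixed-point set of `Π_E` is
`{α : Q(dα) + d(Qα) = 0} = {α : d₀⁻¹(dα) = 0 ∧ d₀⁻¹α = 0}`, i.e.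
`E = ker d₀⁻¹ ∩ ker (d₀⁻¹ ∘ d)`. -/
theorem fixedPoints_PiE_eq_ker_inter_ker
    {V : Type*} [NormedAddCommGroup V] [InnerProductSpace ℝ V] [FiniteDimensional ℝ V]
    (d₀ dinv : V →ₗ[ℝ] V) (hd₀ : d₀ ∘ₗ d₀ = 0)
    (hpinv₁ : (LinearMap.range d₀)ᗮ ≤ LinearMap.ker dinv)
    (hpinv₂ : LinearMap.range dinv ≤ (LinearMap.ker d₀)ᗮ)
    (hpinv₃ : ∀ v : V, d₀ (dinv v) = (Submodule.orthogonalProjectionOnto (LinearMap.range d₀) v : V))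
    (d : V →ₗ[ℝ] V) (hd : d ∘ₗ d = 0)
    (D : V →ₗ[ℝ] V) (hD : D = dinv ∘ₗ (d - d₀))
    (N : ℕ) (hDnil : D ^ (N + 1) = 0)
    (P : V →ₗ[ℝ] V) (hP : P = ∑ k ∈ Finset.range (N + 1), ((-1 : ℝ)) ^ k • D ^ k)
    (Q : V →ₗ[ℝ] V) (hQ : Q = P ∘ₗ dinv)
    (PiE : V →ₗ[ℝ] V) (hPiE : PiE = LinearMap.id - Q ∘ₗ d - d ∘ₗ Q) :
    {α : V | Q (d α) + d (Q α) = 0} =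
      {α : V | dinv (d α) = 0 ∧ dinv α = 0} ∧
    {α : V | PiE α = α} =
      ↑(LinearMap.ker dinv ⊓ LinearMap.ker (dinv ∘ₗ d)) :=
  fixedPoints_PiE_eq_ker_inter_ker_general d₀ dinv hd₀ hpinv₁ hpinv₂ hpinv₃ d D hD N hDnil P hP Q hQ
    PiE hPiE
end

section
/- Set E := ker d₀⁻¹ ∩ ker(d₀⁻¹ ∘ d) and F := range(d₀⁻¹) + range(d ∘ d₀⁻¹). Then: (a) d maps E into E; (b) d maps F into F; (c) V is the internal direct sum of E and F, i.e. E ∩ F = 0 and E + F = V. (This is part (i) of the main theorem: the complex (V, d) splits into the direct sum of the two subcomplexes (E, d) and (F, d).) -/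
/-!
The partial inverse `δ = d₀⁻¹` satisfies `δ δ = 0` and `δ d₀ δ = δ`. Nilpotency of
`D = δ (d - d₀)` makes `P` a two-sided inverse of `1 + D`, and from these relations the
homotopy `Q = P δ` satisfies `δ d Q = δ`, `Q d δ = δ` and `Q ∈ δ · End V`. Then
`Π = 1 - Q d - d Q` is the identity on `E` and vanishes on `F`, while every `v` equals
`Π v + Q d v + d Q v ∈ E + F`.
-/

open LinearMap Submodule

section PartialInverse

variable {𝕜 V : Type*} [RCLike 𝕜] [NormedAddCommGroup V] [InnerProductSpace 𝕜 V]
  {d₀ dinv : V →ₗ[𝕜] V}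

theorem pinv_mul_pinv_eq_zero (hd₀ : d₀ * d₀ = 0)
    (hpinv₁ : (range d₀)ᗮ ≤ ker dinv) (hpinv₂ : range dinv ≤ (ker d₀)ᗮ) :
    dinv * dinv = 0 := by
  refine range_le_ker_iff.1 (hpinv₂.trans ((orthogonal_le ?_).trans hpinv₁))
  exact range_le_ker_iff.2 hd₀

theorem pinv_mul_mul_pinv [(range d₀).HasOrthogonalProjection]
    (hpinv₁ : (range d₀)ᗮ ≤ ker dinv)
    (hpinv₃ : ∀ v, d₀ (dinv v) = (orthogonalProjectionOnto (range d₀) v : V)) :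
    dinv * d₀ * dinv = dinv := by
  ext v
  have hv := hpinv₁ (sub_starProjection_mem_orthogonal (K := range d₀) v)
  rw [mem_ker, map_sub, sub_eq_zero] at hv
  simpa [hpinv₃ v] using hv.symm

end PartialInverse

section Perturbation

-- `P` plays the inverse of `1 + δ (d - d₀)`, and `P * δ` the perturbed homotopy `Q`.
variable {R : Type*} [Ring R] {d d₀ δ P : R}

theorem neg_geom_sum_mul_one_add {D : R} {n : ℕ} (hD : D ^ n = 0) :
    (∑ k ∈ Finset.range n, (-D) ^ k) * (1 + D) = 1 := by
  rw [← sub_neg_eq_add, geom_sum_mul_neg, neg_pow, hD, mul_zero, sub_zero]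

theorem one_add_mul_neg_geom_sum {D : R} {n : ℕ} (hD : D ^ n = 0) :
    (1 + D) * ∑ k ∈ Finset.range n, (-D) ^ k = 1 := by
  rw [← sub_neg_eq_add, mul_neg_geom_sum, neg_pow, hD, mul_zero, sub_zero]

theorem perturbed_eq_mul_left (hP : (1 + δ * (d - d₀)) * P = 1) :
    P * δ = δ * (1 - (d - d₀) * (P * δ)) :=
  calc P * δ = (1 + δ * (d - d₀)) * P * δ - δ * (d - d₀) * (P * δ) := by noncomm_ring
    _ = δ * (1 - (d - d₀) * (P * δ)) := by rw [hP]; noncomm_ring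

theorem mul_mul_perturbed (hδ : δ * d₀ * δ = δ) (hP : (1 + δ * (d - d₀)) * P = 1) :
    δ * d * (P * δ) = δ := by
  have hδd₀Q : δ * d₀ * (P * δ) = P * δ := by
    rw [perturbed_eq_mul_left hP, ← mul_assoc, hδ, ← perturbed_eq_mul_left hP]
  calc δ * d * (P * δ) = δ * (d - d₀) * (P * δ) + δ * d₀ * (P * δ) := by noncomm_ring
    _ = (1 + δ * (d - d₀)) * P * δ := by rw [hδd₀Q]; noncomm_ring
    _ = δ := by rw [hP, one_mul]

theorem perturbed_mul_mul (hδ : δ * d₀ * δ = δ) (hP : P * (1 + δ * (d - d₀)) = 1) :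
    P * δ * d * δ = δ :=
  calc P * δ * d * δ = P * (δ * (d - d₀) * δ + δ * d₀ * δ) := by noncomm_ring
    _ = P * (1 + δ * (d - d₀)) * δ := by rw [hδ]; noncomm_ring
    _ = δ := by rw [hP, one_mul]

end Perturbation

namespace LinearMap

variable {R M : Type*} [Ring R] [AddCommGroup M] [Module R M] {d δ Q : M →ₗ[R] M}

theorem apply_mem_ker_inf_ker_comp (hd : d * d = 0) {x : M}
    (hx : x ∈ ker δ ⊓ ker (δ ∘ₗ d)) : d x ∈ ker δ ⊓ ker (δ ∘ₗ d) := by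
  have hdd : d (d x) = 0 := congr($hd x)
  simp_all

theorem apply_mem_range_sup_range_comp (hd : d * d = 0) {x : M}
    (hx : x ∈ range δ ⊔ range (d ∘ₗ δ)) : d x ∈ range δ ⊔ range (d ∘ₗ δ) := by
  obtain ⟨_, ⟨a, rfl⟩, _, ⟨b, rfl⟩, rfl⟩ := mem_sup.1 hx
  have hdd : d (d (δ b)) = 0 := congr($hd (δ b))
  simpa [hdd] using mem_sup_right (mem_range_self (d ∘ₗ δ) a)

/-- `1 - Q d - d Q` is the projection onto the first summand along the second. -/
theorem isCompl_ker_inf_ker_comp_range_sup_range_comp (hd : d * d = 0) (hδ : δ * δ = 0)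
    (hQ_range : range Q ≤ range δ) (hQ_ker : ker δ ≤ ker Q)
    (hδdQ : δ * d * Q = δ) (hQdδ : Q * d * δ = δ) :
    IsCompl (ker δ ⊓ ker (δ ∘ₗ d)) (range δ ⊔ range (d ∘ₗ δ)) := by
  have hδQ : δ * Q = 0 := range_le_ker_iff.1 (hQ_range.trans (range_le_ker_iff.2 hδ))
  have hQδ : Q * δ = 0 := range_le_ker_iff.1 ((range_le_ker_iff.2 hδ).trans hQ_ker)
  set π : M →ₗ[R] M := 1 - Q * d - d * Q with hπ
  have hπ_mem (v : M) : π v ∈ ker δ ⊓ ker (δ ∘ₗ d) := by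
    have hδπ : δ * π = 0 :=
      calc δ * π = δ - δ * Q * d - δ * d * Q := by rw [hπ]; noncomm_ring
        _ = 0 := by rw [hδQ, hδdQ]; noncomm_ring
    have hδdπ : δ * d * π = 0 := by
      calc δ * d * π = δ * d - δ * d * Q * d - δ * (d * d) * Q := by rw [hπ]; noncomm_ring
        _ = 0 := by rw [hδdQ, hd]; noncomm_ring
    exact ⟨congr($hδπ v), congr($hδdπ v)⟩
  have hπ_eq_self {x : M} (hx : x ∈ ker δ ⊓ ker (δ ∘ₗ d)) : π x = x := by
    have hQx : Q x = 0 := hQ_ker hx.1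
    have hQdx : Q (d x) = 0 := hQ_ker hx.2
    simp [hπ, hQx, hQdx]
  have hπ_eq_zero {y : M} (hy : y ∈ range δ ⊔ range (d ∘ₗ δ)) : π y = 0 := by
    have hπδ : π * δ = 0 := by
      calc π * δ = δ - Q * d * δ - d * (Q * δ) := by rw [hπ]; noncomm_ring
        _ = 0 := by rw [hQdδ, hQδ]; noncomm_ring
    have hπdδ : π * d * δ = 0 := by
      calc π * d * δ = d * (π * δ) - Q * (d * d) * δ + (d * d) * Q * δ := by rw [hπ]; noncomm_ring
        _ = 0 := by rw [hπδ, hd]; noncomm_ring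
    obtain ⟨_, ⟨a, rfl⟩, _, ⟨b, rfl⟩, rfl⟩ := mem_sup.1 hy
    simp [← Module.End.mul_apply, hπδ, ← mul_assoc, hπdδ]
  refine ⟨disjoint_def.2 fun x hxE hxF => (hπ_eq_self hxE).symm.trans (hπ_eq_zero hxF), ?_⟩
  refine codisjoint_iff.2 (eq_top_iff.2 fun v _ => ?_)
  have hv : v = π v + (Q (d v) + d (Q v)) := by simp [hπ]
  obtain ⟨u, hu⟩ := hQ_range (mem_range_self Q v)
  rw [hv]
  refine add_mem (mem_sup_left (hπ_mem v)) (mem_sup_right (add_mem ?_ ?_))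
  · exact mem_sup_left (hQ_range (mem_range_self Q (d v)))
  · exact mem_sup_right ⟨u, by simp [hu]⟩

end LinearMap

theorem deRham_splits_into_E_and_F_general
    {V : Type*} [NormedAddCommGroup V] [InnerProductSpace ℝ V] [FiniteDimensional ℝ V]
    (d₀ dinv : V →ₗ[ℝ] V) (hd₀ : d₀ ∘ₗ d₀ = 0)
    (hpinv₁ : (LinearMap.range d₀)ᗮ ≤ LinearMap.ker dinv)
    (hpinv₂ : LinearMap.range dinv ≤ (LinearMap.ker d₀)ᗮ)
    (hpinv₃ : ∀ v : V, d₀ (dinv v) = (Submodule.orthogonalProjection (LinearMap.range d₀) v : V))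
    (d : V →ₗ[ℝ] V) (hd : d ∘ₗ d = 0)
    (D : V →ₗ[ℝ] V) (hD : D = dinv ∘ₗ (d - d₀))
    (N : ℕ) (hDnil : D ^ (N + 1) = 0)
    (P : V →ₗ[ℝ] V) (hP : P = ∑ k ∈ Finset.range (N + 1), ((-1 : ℝ)) ^ k • D ^ k)
    (E F : Submodule ℝ V)
    (hE : E = LinearMap.ker dinv ⊓ LinearMap.ker (dinv ∘ₗ d))
    (hF : F = LinearMap.range dinv ⊔ LinearMap.range (d ∘ₗ dinv)) :
    (∀ x ∈ E, d x ∈ E) ∧ (∀ x ∈ F, d x ∈ F) ∧ E ⊓ F = ⊥ ∧ E ⊔ F = ⊤ := by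
  subst hE hF
  have hP' : P = ∑ k ∈ Finset.range (N + 1), (-D) ^ k := by
    simp only [hP, ← neg_one_smul ℝ D, smul_pow]
  have hD' : dinv * (d - d₀) = D := hD.symm
  have hPD : P * (1 + dinv * (d - d₀)) = 1 := hD' ▸ hP' ▸ neg_geom_sum_mul_one_add hDnil
  have hDP : (1 + dinv * (d - d₀)) * P = 1 := hD' ▸ hP' ▸ one_add_mul_neg_geom_sum hDnil
  have hpinv := pinv_mul_mul_pinv hpinv₁ hpinv₃
  have hsplit := isCompl_ker_inf_ker_comp_range_sup_range_comp (Q := P * dinv) hd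
    (pinv_mul_pinv_eq_zero hd₀ hpinv₁ hpinv₂)
    (perturbed_eq_mul_left hDP ▸ range_comp_le_range _ _) (ker_le_ker_comp _ _)
    (mul_mul_perturbed hpinv hDP) (perturbed_mul_mul hpinv hPD)
  exact ⟨fun _ => apply_mem_ker_inf_ker_comp hd, fun _ => apply_mem_range_sup_range_comp hd,
    hsplit.inf_eq_bot, hsplit.sup_eq_top⟩

/-- With `E := ker d₀⁻¹ ⊓ ker (d₀⁻¹ ∘ d)` and
`F := range d₀⁻¹ ⊔ range (d ∘ d₀⁻¹)`: `d` maps `E` into `E` and `F` into `F`,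
and `V` is the internal direct sum of `E` and `F`. -/
theorem deRham_splits_into_E_and_F
    {V : Type*} [NormedAddCommGroup V] [InnerProductSpace ℝ V] [FiniteDimensional ℝ V]
    (d₀ dinv : V →ₗ[ℝ] V) (hd₀ : d₀ ∘ₗ d₀ = 0)
    (hpinv₁ : (LinearMap.range d₀)ᗮ ≤ LinearMap.ker dinv)
    (hpinv₂ : LinearMap.range dinv ≤ (LinearMap.ker d₀)ᗮ)
    (hpinv₃ : ∀ v : V, d₀ (dinv v) = (Submodule.orthogonalProjection (LinearMap.range d₀) v : V))
    (d : V →ₗ[ℝ] V) (hd : d ∘ₗ d = 0)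
    (D : V →ₗ[ℝ] V) (hD : D = dinv ∘ₗ (d - d₀))
    (N : ℕ) (hDnil : D ^ (N + 1) = 0)
    (P : V →ₗ[ℝ] V) (hP : P = ∑ k ∈ Finset.range (N + 1), ((-1 : ℝ)) ^ k • D ^ k)
    (Q : V →ₗ[ℝ] V) (hQ : Q = P ∘ₗ dinv)
    (PiE : V →ₗ[ℝ] V) (hPiE : PiE = LinearMap.id - Q ∘ₗ d - d ∘ₗ Q)
    (E F : Submodule ℝ V)
    (hE : E = LinearMap.ker dinv ⊓ LinearMap.ker (dinv ∘ₗ d))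
    (hF : F = LinearMap.range dinv ⊔ LinearMap.range (d ∘ₗ dinv)) :
    (∀ x ∈ E, d x ∈ E) ∧ (∀ x ∈ F, d x ∈ F) ∧ E ⊓ F = ⊥ ∧ E ⊔ F = ⊤ :=
  deRham_splits_into_E_and_F_general d₀ dinv hd₀ hpinv₁ hpinv₂ hpinv₃ d hd D hD N hDnil P hP E F hE
    hF
end

section
/- Let r := id − d₀⁻¹ ∘ d − d ∘ d₀⁻¹. Then the powers of r stabilize to Π_E: there exists a natural number M such that r^k = Π_E for all k ≥ M. (This is the paper's claim, in the proof of part (ii) of the main theorem, that iterating the homotopy retraction r = Id − d₀⁻¹d − d d₀⁻¹ stabilizes in finitely many steps to the projection Π_E.) -/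
/-!
Write `X = d₀⁻¹ d + d d₀⁻¹` and `Y = Q d + d Q`, so that `r = 1 - X` and `Π_E = 1 - Y`.
Since `d₀⁻¹ d₀⁻¹ = 0` and `d₀⁻¹ d₀ d₀⁻¹ = d₀⁻¹`, and `P` inverts `1 + D`, one gets
`d₀⁻¹ d Q = d₀⁻¹ = Q d d₀⁻¹` and `Q d Q = Q`; hence `Y` is idempotent and `X Y = Y X = X`.
So `r = Π_E + (Y - X)` with `Π_E (Y - X) = (Y - X) Π_E = 0`, and `r ^ k = Π_E + (Y - X) ^ k`.
Finally `Y - X = u d + d u` with `u = Q - d₀⁻¹ = -D Q`, which is nilpotent because `D` is.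
-/

open Finset LinearMap

section Ring

variable {R : Type*} [Ring R]

theorem add_pow_succ_of_mul_eq_zero {a b : R} (hab : a * b = 0) (hba : b * a = 0) (n : ℕ) :
    (a + b) ^ (n + 1) = a ^ (n + 1) + b ^ (n + 1) := by
  induction n with
  | zero => simp
  | succ n ih =>
    have hab' : a ^ (n + 1) * b = 0 := by rw [pow_succ, mul_assoc, hab, mul_zero]
    have hba' : b ^ (n + 1) * a = 0 := by rw [pow_succ, mul_assoc, hba, mul_zero]
    rw [pow_succ (a + b), ih, add_mul, mul_add, mul_add, hab', hba', add_zero, zero_add,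
      ← pow_succ, ← pow_succ]

theorem IsNilpotent.mul_comm {a b : R} (h : IsNilpotent (a * b)) : IsNilpotent (b * a) := by
  obtain ⟨n, hn⟩ := h
  exact ⟨n + 1, by rw [_root_.pow_succ, ← mul_assoc, mul_pow_mul, hn, mul_zero, zero_mul]⟩

theorem geom_sum_neg_mul_one_add {x : R} {n : ℕ} (hx : x ^ n = 0) :
    (∑ i ∈ range n, (-x) ^ i) * (1 + x) = 1 := by
  have h := geom_sum_mul_neg (-x) n
  rwa [sub_neg_eq_add, neg_pow, hx, mul_zero, sub_zero] at h

theorem one_add_mul_geom_sum_neg {x : R} {n : ℕ} (hx : x ^ n = 0) :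
    (1 + x) * ∑ i ∈ range n, (-x) ^ i = 1 := by
  have h := mul_neg_geom_sum (-x) n
  rwa [sub_neg_eq_add, neg_pow, hx, mul_zero, sub_zero] at h

theorem IsIdempotentElem.exists_pow_add_eq {e s : R} (he : IsIdempotentElem e)
    (hes : e * s = 0) (hse : s * e = 0) (hs : IsNilpotent s) :
    ∃ M : ℕ, ∀ k, M ≤ k → (e + s) ^ k = e := by
  obtain ⟨n, hn⟩ := hs
  refine ⟨n + 1, fun k hk => ?_⟩
  obtain ⟨m, rfl⟩ : ∃ m, k = m + 1 := ⟨k - 1, by omega⟩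
  rw [add_pow_succ_of_mul_eq_zero hes hse, he.pow_succ_eq, pow_eq_zero_of_le (by omega) hn,
    add_zero]

theorem exists_pow_one_sub_eq_one_sub {X Y : R} (hY : IsIdempotentElem Y) (hXY : X * Y = X)
    (hYX : Y * X = X) (hnil : IsNilpotent (Y - X)) :
    ∃ M : ℕ, ∀ k, M ≤ k → (1 - X) ^ k = 1 - Y := by
  have hYs : (1 - Y) * (Y - X) = 0 := by
    rw [one_sub_mul, mul_sub, hY.eq, hYX, sub_sub_sub_cancel_right, sub_self]
  have hsY : (Y - X) * (1 - Y) = 0 := by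
    rw [mul_one_sub, sub_mul, hY.eq, hXY, sub_sub_sub_cancel_right, sub_self]
  simpa only [sub_add_sub_cancel] using hY.one_sub.exists_pow_add_eq hYs hsY hnil

theorem exists_pow_one_sub_homotopy_eq {d h Q : R} (hdd : d * d = 0) (hhh : h * h = 0)
    (hQQ : Q * Q = 0) (hhQ : h * Q = 0) (hQh : Q * h = 0) (hQdQ : Q * d * Q = Q)
    (hhdQ : h * d * Q = h) (hQdh : Q * d * h = h) (hnil : IsNilpotent ((Q - h) * d)) :
    ∃ M : ℕ, ∀ k, M ≤ k → (1 - h * d - d * h) ^ k = 1 - Q * d - d * Q := by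
  have hY : IsIdempotentElem (Q * d + d * Q) := calc
    (Q * d + d * Q) * (Q * d + d * Q)
        = Q * d * Q * d + Q * (d * d) * Q + d * (Q * Q) * d + d * (Q * d * Q) := by noncomm_ring
    _ = Q * d + d * Q := by rw [hQdQ, hdd, hQQ]; noncomm_ring
  have hXY : (h * d + d * h) * (Q * d + d * Q) = h * d + d * h := calc
    _ = h * d * Q * d + h * (d * d) * Q + d * (h * Q) * d + d * (h * d * Q) := by noncomm_ring
    _ = h * d + d * h := by rw [hhdQ, hdd, hhQ]; noncomm_ring
  have hYX : (Q * d + d * Q) * (h * d + d * h) = h * d + d * h := calc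
    _ = Q * d * h * d + Q * (d * d) * h + d * (Q * h) * d + d * (Q * d * h) := by noncomm_ring
    _ = h * d + d * h := by rw [hQdh, hdd, hQh]; noncomm_ring
  have huu : (Q - h) * (Q - h) = 0 := by
    rw [sub_mul, mul_sub, mul_sub, hQQ, hQh, hhQ, hhh]; abel
  have hAB : (Q - h) * d * (d * (Q - h)) = 0 := by
    rw [mul_assoc, ← mul_assoc d d, hdd, zero_mul, mul_zero]
  have hBA : d * (Q - h) * ((Q - h) * d) = 0 := by
    rw [mul_assoc, ← mul_assoc (Q - h), huu, zero_mul, mul_zero]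
  have hcomm : Commute ((Q - h) * d) (d * (Q - h)) := hAB.trans hBA.symm
  have hnil' : IsNilpotent ((Q * d + d * Q) - (h * d + d * h)) := by
    convert hcomm.isNilpotent_add hnil hnil.mul_comm using 1
    noncomm_ring
  simpa only [sub_add_eq_sub_sub] using exists_pow_one_sub_eq_one_sub hY hXY hYX hnil'

theorem exists_pow_one_sub_homotopy_eq_of_partialInverse {a h d P : R} (hdd : d * d = 0)
    (hhh : h * h = 0) (hah : h * a * h = h) (hP₁ : P * (1 + h * (d - a)) = 1)
    (hP₂ : (1 + h * (d - a)) * P = 1) (hnil : IsNilpotent (h * (d - a))) :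
    ∃ M : ℕ, ∀ k, M ≤ k → (1 - h * d - d * h) ^ k = 1 - P * h * d - d * (P * h) := by
  have hhP : h * P = h := calc
    h * P = h * (1 + h * (d - a)) * P := by rw [mul_add, ← mul_assoc, hhh]; simp
    _ = h := by rw [mul_assoc, hP₂, mul_one]
  have hhd : h * d = h * a * (1 + h * (d - a)) := by
    rw [mul_add, mul_one, ← mul_assoc, hah]; noncomm_ring
  have hhdh : h * d * h = (1 + h * (d - a)) * h := by
    rw [add_mul, one_mul, mul_assoc h (d - a), sub_mul, mul_sub, ← mul_assoc, ← mul_assoc, hah]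
    abel
  have hhQ : h * (P * h) = 0 := by rw [← mul_assoc, hhP, hhh]
  have hhdQ : h * d * (P * h) = h := by
    rw [hhd, mul_assoc (h * a), ← mul_assoc _ P, hP₂, one_mul, hah]
  have hQdh : P * h * d * h = h := by
    rw [mul_assoc P, mul_assoc P, hhdh, ← mul_assoc, hP₁, one_mul]
  have hQdD : P * h * d * (h * (d - a)) = h * (d - a) := by rw [← mul_assoc, hQdh]
  have hud : (P * h - h) * d = -(h * (d - a) * (P * h * d)) := calc
    (P * h - h) * d = (P - (1 + h * (d - a)) * P) * h * d := by rw [hP₂]; noncomm_ring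
    _ = _ := by noncomm_ring
  refine exists_pow_one_sub_homotopy_eq hdd hhh ?_ hhQ ?_ ?_ hhdQ hQdh ?_
  · rw [mul_assoc, hhQ, mul_zero]
  · rw [mul_assoc, hhh, mul_zero]
  · rw [mul_assoc P h d, mul_assoc P (h * d), hhdQ]
  · rw [hud, isNilpotent_neg_iff]
    apply IsNilpotent.mul_comm
    rwa [hQdD]

end Ring

section PartialInverse

variable {𝕜 : Type*} [RCLike 𝕜]

theorem partialInverse_comp_self_eq_zero {V : Type*} [NormedAddCommGroup V]
    [InnerProductSpace 𝕜 V] {a h : V →ₗ[𝕜] V} (ha : a ∘ₗ a = 0) (h₁ : (range a)ᗮ ≤ ker h)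
    (h₂ : range h ≤ (ker a)ᗮ) :
    h ∘ₗ h = 0 :=
  range_le_ker_iff.mp <| h₂.trans <| (Submodule.orthogonal_le (range_le_ker_iff.mpr ha)).trans h₁

theorem partialInverse_comp_comp_self {V W : Type*} [AddCommGroup V] [Module 𝕜 V]
    [NormedAddCommGroup W] [InnerProductSpace 𝕜 W] {a : V →ₗ[𝕜] W} {h : W →ₗ[𝕜] V}
    [(range a).HasOrthogonalProjection] (h₁ : (range a)ᗮ ≤ ker h)
    (h₃ : ∀ w, a (h w) = (range a).starProjection w) :
    h ∘ₗ a ∘ₗ h = h := by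
  ext w
  have hw : h (w - a (h w)) = 0 := h₁ (h₃ w ▸ Submodule.sub_starProjection_mem_orthogonal w)
  rw [map_sub, sub_eq_zero] at hw
  exact hw.symm

end PartialInverse

/-- The powers of the retraction `r := id − d₀⁻¹ ∘ d − d ∘ d₀⁻¹`
stabilize to `Π_E` in finitely many steps. -/
theorem retraction_powers_stabilize_to_PiE
    {V : Type*} [NormedAddCommGroup V] [InnerProductSpace ℝ V] [FiniteDimensional ℝ V]
    (d₀ dinv : V →ₗ[ℝ] V) (hd₀ : d₀ ∘ₗ d₀ = 0)
    (hpinv₁ : (LinearMap.range d₀)ᗮ ≤ LinearMap.ker dinv)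
    (hpinv₂ : LinearMap.range dinv ≤ (LinearMap.ker d₀)ᗮ)
    (hpinv₃ : ∀ v : V, d₀ (dinv v) = (Submodule.orthogonalProjection (LinearMap.range d₀) v : V))
    (d : V →ₗ[ℝ] V) (hd : d ∘ₗ d = 0)
    (D : V →ₗ[ℝ] V) (hD : D = dinv ∘ₗ (d - d₀))
    (N : ℕ) (hDnil : D ^ (N + 1) = 0)
    (P : V →ₗ[ℝ] V) (hP : P = ∑ k ∈ Finset.range (N + 1), ((-1 : ℝ)) ^ k • D ^ k)
    (Q : V →ₗ[ℝ] V) (hQ : Q = P ∘ₗ dinv)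
    (PiE : V →ₗ[ℝ] V) (hPiE : PiE = LinearMap.id - Q ∘ₗ d - d ∘ₗ Q)
    (r : V →ₗ[ℝ] V) (hr : r = LinearMap.id - dinv ∘ₗ d - d ∘ₗ dinv) :
    ∃ M : ℕ, ∀ k : ℕ, M ≤ k → r ^ k = PiE := by
  have hP' : P = ∑ k ∈ range (N + 1), (-D) ^ k := by
    simp only [hP, ← smul_pow, neg_one_smul]
  have hP₁ : P * (1 + D) = 1 := hP' ▸ geom_sum_neg_mul_one_add hDnil
  have hP₂ : (1 + D) * P = 1 := hP' ▸ one_add_mul_geom_sum_neg hDnil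
  subst hD hQ hPiE hr
  exact exists_pow_one_sub_homotopy_eq_of_partialInverse hd
    (partialInverse_comp_self_eq_zero hd₀ hpinv₁ hpinv₂)
    (partialInverse_comp_comp_self hpinv₁ hpinv₃) hP₁ hP₂ ⟨N + 1, hDnil⟩
end

section
/- One has Π_E ∘ Π_{E₀} ∘ Π_E = Π_E and Π_{E₀} ∘ Π_E ∘ Π_{E₀} = Π_{E₀}. Consequently the restriction of Π_{E₀} to E := ker d₀⁻¹ ∩ ker(d₀⁻¹ ∘ d) and the restriction of Π_E to E₀ := ker d₀ ∩ (range d₀)ᗮ are mutually inverse linear bijections between E and E₀. -/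
/-!
Everything reduces to identities in the endomorphism ring. The partial-inverse axioms give
`d₀⁻¹ d₀⁻¹ = 0`, `d₀⁻¹ d₀ d₀⁻¹ = d₀⁻¹` and `d₀ d₀⁻¹ d₀ = d₀`, and nilpotency of `D` makes `P` a
two-sided inverse of `1 + D`. From these, `d₀⁻¹ Π_E = 0`, `d₀⁻¹ d Π_E = 0` and `Π_E d₀⁻¹ = 0`, so
`Π_E` is idempotent and `Π_E Π_{E₀} Π_E = Π_E`; likewise `Π_{E₀}` annihilates `d₀⁻¹` and `d₀` on
both sides and `Π_{E₀} Q = 0`, giving `Π_{E₀} Π_E Π_{E₀} = Π_{E₀}`. Since `Π_E` maps into `E` and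
is the identity there, and `Π_{E₀}` maps into `E₀` and is the identity there, the two identities
say that the restrictions are mutually inverse.
-/

open Finset LinearMap

section GeomSum

variable {𝕜 A : Type*} [CommRing 𝕜] [Ring A] [Algebra 𝕜 A]

theorem sum_neg_one_pow_smul_pow_eq (D : A) (n : ℕ) :
    ∑ k ∈ range n, (-1 : 𝕜) ^ k • D ^ k = ∑ k ∈ range n, (-D) ^ k := by
  simp_rw [← smul_pow, neg_one_smul]

theorem sum_neg_one_pow_smul_pow_mul_one_add {D : A} {n : ℕ} (hD : D ^ n = 0) :
    (∑ k ∈ range n, (-1 : 𝕜) ^ k • D ^ k) * (1 + D) = 1 := by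
  rw [sum_neg_one_pow_smul_pow_eq, ← sub_neg_eq_add, geom_sum_mul_neg, neg_pow, hD, mul_zero,
    sub_zero]

theorem one_add_mul_sum_neg_one_pow_smul_pow {D : A} {n : ℕ} (hD : D ^ n = 0) :
    (1 + D) * ∑ k ∈ range n, (-1 : 𝕜) ^ k • D ^ k = 1 := by
  rw [sum_neg_one_pow_smul_pow_eq, ← sub_neg_eq_add, mul_neg_geom_sum, neg_pow, hD, mul_zero,
    sub_zero]

end GeomSum

namespace PartialInverse

variable {R : Type*} [Ring R]

-- `Q = P * dinv`, where `P` will be the inverse of `1 + dinv * (d - d₀)`.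
def piE (dinv d P : R) : R := 1 - P * dinv * d - d * (P * dinv)

def piE₀ (d₀ dinv : R) : R := 1 - dinv * d₀ - d₀ * dinv

variable {d₀ dinv d P : R}

theorem dinv_mul_P (hinv : dinv * dinv = 0) (hPr : (1 + dinv * (d - d₀)) * P = 1) :
    dinv * P = dinv :=
  calc dinv * P = dinv * (1 + dinv * (d - d₀)) * P := by
        rw [mul_add, mul_one, ← mul_assoc, hinv, zero_mul, add_zero]
    _ = dinv := by rw [mul_assoc, hPr, mul_one]

theorem dinv_mul_d₀_mul_Q (hidi : dinv * d₀ * dinv = dinv)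
    (hPr : (1 + dinv * (d - d₀)) * P = 1) :
    dinv * d₀ * (P * dinv) = P * dinv := by
  -- `Q` lies in `dinv * R`, on which left multiplication by `dinv * d₀` is the identity.
  have hQ : P * dinv = dinv * (1 - (d - d₀) * P * dinv) :=
    calc P * dinv = (1 + dinv * (d - d₀)) * P * dinv - dinv * ((d - d₀) * P * dinv) := by
          noncomm_ring
      _ = dinv * (1 - (d - d₀) * P * dinv) := by rw [hPr]; noncomm_ring
  rw [hQ, ← mul_assoc, hidi]

theorem dinv_mul_d_mul_Q (hidi : dinv * d₀ * dinv = dinv)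
    (hPr : (1 + dinv * (d - d₀)) * P = 1) :
    dinv * d * (P * dinv) = dinv :=
  calc dinv * d * (P * dinv)
        = dinv * d₀ * (P * dinv) + ((1 + dinv * (d - d₀)) * P - P) * dinv := by noncomm_ring
    _ = dinv := by rw [dinv_mul_d₀_mul_Q hidi hPr, hPr]; noncomm_ring

theorem Q_mul_d_mul_dinv (hidi : dinv * d₀ * dinv = dinv)
    (hPl : P * (1 + dinv * (d - d₀)) = 1) :
    P * dinv * d * dinv = dinv :=
  calc P * dinv * d * dinv
        = P * (dinv * d₀ * dinv) + (P * (1 + dinv * (d - d₀)) - P) * dinv := by noncomm_ring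
    _ = dinv := by rw [hidi, hPl]; noncomm_ring

theorem dinv_mul_piE_eq_zero (hinv : dinv * dinv = 0) (hidi : dinv * d₀ * dinv = dinv)
    (hPr : (1 + dinv * (d - d₀)) * P = 1) :
    dinv * piE dinv d P = 0 :=
  calc dinv * piE dinv d P = dinv - dinv * P * dinv * d - dinv * d * (P * dinv) := by
        unfold piE; noncomm_ring
    _ = 0 := by rw [dinv_mul_P hinv hPr, hinv, dinv_mul_d_mul_Q hidi hPr]; noncomm_ring

theorem dinv_mul_d_mul_piE_eq_zero (hidi : dinv * d₀ * dinv = dinv)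
    (hPr : (1 + dinv * (d - d₀)) * P = 1) (hd : d * d = 0) :
    dinv * d * piE dinv d P = 0 :=
  calc dinv * d * piE dinv d P
        = dinv * d - dinv * d * (P * dinv) * d - dinv * (d * d) * (P * dinv) := by
        unfold piE; noncomm_ring
    _ = 0 := by rw [dinv_mul_d_mul_Q hidi hPr, hd]; noncomm_ring

theorem piE_mul_dinv_eq_zero (hinv : dinv * dinv = 0) (hidi : dinv * d₀ * dinv = dinv)
    (hPl : P * (1 + dinv * (d - d₀)) = 1) :
    piE dinv d P * dinv = 0 :=
  calc piE dinv d P * dinv = dinv - P * dinv * d * dinv - d * P * (dinv * dinv) := by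
        unfold piE; noncomm_ring
    _ = 0 := by rw [Q_mul_d_mul_dinv hidi hPl, hinv]; noncomm_ring

theorem piE_mul_piE (h₁ : dinv * piE dinv d P = 0) (h₂ : dinv * d * piE dinv d P = 0) :
    piE dinv d P * piE dinv d P = piE dinv d P :=
  calc piE dinv d P * piE dinv d P
        = piE dinv d P - P * (dinv * d * piE dinv d P) - d * P * (dinv * piE dinv d P) := by
        unfold piE; noncomm_ring
    _ = piE dinv d P := by rw [h₁, h₂]; noncomm_ring

theorem piE_mul_piE₀_mul_piE (hinv : dinv * dinv = 0) (hidi : dinv * d₀ * dinv = dinv)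
    (hPl : P * (1 + dinv * (d - d₀)) = 1) (hPr : (1 + dinv * (d - d₀)) * P = 1)
    (hd : d * d = 0) :
    piE dinv d P * piE₀ d₀ dinv * piE dinv d P = piE dinv d P := by
  have h₁ := dinv_mul_piE_eq_zero hinv hidi hPr
  calc piE dinv d P * piE₀ d₀ dinv * piE dinv d P
        = piE dinv d P * piE dinv d P - piE dinv d P * dinv * d₀ * piE dinv d P
          - piE dinv d P * d₀ * (dinv * piE dinv d P) := by unfold piE₀; noncomm_ring
    _ = piE dinv d P := by
        rw [piE_mul_piE h₁ (dinv_mul_d_mul_piE_eq_zero hidi hPr hd),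
          piE_mul_dinv_eq_zero hinv hidi hPl, h₁]
        noncomm_ring

theorem dinv_mul_piE₀_eq_zero (hinv : dinv * dinv = 0) (hidi : dinv * d₀ * dinv = dinv) :
    dinv * piE₀ d₀ dinv = 0 :=
  calc dinv * piE₀ d₀ dinv = dinv - dinv * dinv * d₀ - dinv * d₀ * dinv := by
        unfold piE₀; noncomm_ring
    _ = 0 := by rw [hinv, hidi]; noncomm_ring

theorem piE₀_mul_dinv_eq_zero (hinv : dinv * dinv = 0) (hidi : dinv * d₀ * dinv = dinv) :
    piE₀ d₀ dinv * dinv = 0 :=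
  calc piE₀ d₀ dinv * dinv = dinv - dinv * d₀ * dinv - d₀ * (dinv * dinv) := by
        unfold piE₀; noncomm_ring
    _ = 0 := by rw [hinv, hidi]; noncomm_ring

theorem d₀_mul_piE₀_eq_zero (hd₀ : d₀ * d₀ = 0) (hdid : d₀ * dinv * d₀ = d₀) :
    d₀ * piE₀ d₀ dinv = 0 :=
  calc d₀ * piE₀ d₀ dinv = d₀ - d₀ * dinv * d₀ - d₀ * d₀ * dinv := by unfold piE₀; noncomm_ring
    _ = 0 := by rw [hd₀, hdid]; noncomm_ring

theorem piE₀_mul_d₀_eq_zero (hd₀ : d₀ * d₀ = 0) (hdid : d₀ * dinv * d₀ = d₀) :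
    piE₀ d₀ dinv * d₀ = 0 :=
  calc piE₀ d₀ dinv * d₀ = d₀ - dinv * (d₀ * d₀) - d₀ * dinv * d₀ := by unfold piE₀; noncomm_ring
    _ = 0 := by rw [hd₀, hdid]; noncomm_ring

theorem piE₀_mul_Q_eq_zero (hinv : dinv * dinv = 0) (hidi : dinv * d₀ * dinv = dinv)
    (hPr : (1 + dinv * (d - d₀)) * P = 1) :
    piE₀ d₀ dinv * (P * dinv) = 0 :=
  calc piE₀ d₀ dinv * (P * dinv)
        = P * dinv - dinv * d₀ * (P * dinv) - d₀ * (dinv * P) * dinv := by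
        unfold piE₀; noncomm_ring
    _ = 0 := by
        rw [dinv_mul_d₀_mul_Q hidi hPr, dinv_mul_P hinv hPr, mul_assoc, hinv]; noncomm_ring

theorem piE₀_mul_piE₀ (hinv : dinv * dinv = 0) (hidi : dinv * d₀ * dinv = dinv)
    (hd₀ : d₀ * d₀ = 0) (hdid : d₀ * dinv * d₀ = d₀) :
    piE₀ d₀ dinv * piE₀ d₀ dinv = piE₀ d₀ dinv :=
  calc piE₀ d₀ dinv * piE₀ d₀ dinv
        = piE₀ d₀ dinv - piE₀ d₀ dinv * dinv * d₀ - piE₀ d₀ dinv * d₀ * dinv := by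
        unfold piE₀; noncomm_ring
    _ = piE₀ d₀ dinv := by
        rw [piE₀_mul_dinv_eq_zero hinv hidi, piE₀_mul_d₀_eq_zero hd₀ hdid]; noncomm_ring

theorem piE₀_mul_piE_mul_piE₀ (hinv : dinv * dinv = 0) (hidi : dinv * d₀ * dinv = dinv)
    (hPr : (1 + dinv * (d - d₀)) * P = 1) (hd₀ : d₀ * d₀ = 0) (hdid : d₀ * dinv * d₀ = d₀) :
    piE₀ d₀ dinv * piE dinv d P * piE₀ d₀ dinv = piE₀ d₀ dinv :=
  calc piE₀ d₀ dinv * piE dinv d P * piE₀ d₀ dinv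
        = piE₀ d₀ dinv * piE₀ d₀ dinv - piE₀ d₀ dinv * (P * dinv) * d * piE₀ d₀ dinv
          - piE₀ d₀ dinv * d * P * (dinv * piE₀ d₀ dinv) := by unfold piE; noncomm_ring
    _ = piE₀ d₀ dinv := by
        rw [piE₀_mul_piE₀ hinv hidi hd₀ hdid, piE₀_mul_Q_eq_zero hinv hidi hPr,
          dinv_mul_piE₀_eq_zero hinv hidi]
        noncomm_ring

end PartialInverse

section InnerProductSpace

variable {𝕜 V : Type*} [RCLike 𝕜] [NormedAddCommGroup V] [InnerProductSpace 𝕜 V]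

structure IsPartialInverse_s13 (d₀ dinv : V →ₗ[𝕜] V) [(range d₀).HasOrthogonalProjection] :
    Prop where
  orthogonal_range_le_ker : (range d₀)ᗮ ≤ ker dinv
  range_le_orthogonal_ker : range dinv ≤ (ker d₀)ᗮ
  apply_apply : ∀ v, d₀ (dinv v) = (range d₀).starProjection v

namespace IsPartialInverse_s13

variable {d₀ dinv : V →ₗ[𝕜] V} [(range d₀).HasOrthogonalProjection]

theorem range_le_orthogonal_range (h : IsPartialInverse_s13 d₀ dinv) (hd₀ : d₀ * d₀ = 0) :
    range dinv ≤ (range d₀)ᗮ :=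
  h.range_le_orthogonal_ker.trans (Submodule.orthogonal_le (range_le_ker_iff.mpr hd₀))

theorem mul_self_eq_zero (h : IsPartialInverse_s13 d₀ dinv) (hd₀ : d₀ * d₀ = 0) :
    dinv * dinv = 0 :=
  range_le_ker_iff.mp ((h.range_le_orthogonal_range hd₀).trans h.orthogonal_range_le_ker)

theorem d₀_mul_dinv_mul_d₀ (h : IsPartialInverse_s13 d₀ dinv) : d₀ * dinv * d₀ = d₀ := by
  ext v
  exact (h.apply_apply (d₀ v)).trans (Submodule.starProjection_eq_self_iff.mpr ⟨v, rfl⟩)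

theorem dinv_mul_d₀_mul_dinv (h : IsPartialInverse_s13 d₀ dinv) : dinv * d₀ * dinv = dinv := by
  ext v
  have hv : dinv (v - d₀ (dinv v)) = 0 := by
    rw [h.apply_apply]
    exact h.orthogonal_range_le_ker (Submodule.sub_starProjection_mem_orthogonal v)
  exact (sub_eq_zero.mp (by rwa [map_sub] at hv)).symm

theorem sub_sub_mem_orthogonal (h : IsPartialInverse_s13 d₀ dinv) (hd₀ : d₀ * d₀ = 0) (v : V) :
    v - dinv (d₀ v) - d₀ (dinv v) ∈ (range d₀)ᗮ := by
  rw [sub_right_comm, h.apply_apply]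
  exact sub_mem (Submodule.sub_starProjection_mem_orthogonal v)
    (h.range_le_orthogonal_range hd₀ ⟨d₀ v, rfl⟩)

end IsPartialInverse_s13

end InnerProductSpace

open PartialInverse in
/-- `Π_E ∘ Π_{E₀} ∘ Π_E = Π_E` and `Π_{E₀} ∘ Π_E ∘ Π_{E₀} = Π_{E₀}`;
consequently `Π_{E₀}` restricted to `E` and `Π_E` restricted to `E₀` are mutually
inverse bijections between `E` and `E₀`. -/
theorem PiE_PiE0_mutually_inverse_on_E_and_E0
    {V : Type*} [NormedAddCommGroup V] [InnerProductSpace ℝ V] [FiniteDimensional ℝ V]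
    (d₀ dinv : V →ₗ[ℝ] V) (hd₀ : d₀ ∘ₗ d₀ = 0)
    (hpinv₁ : (LinearMap.range d₀)ᗮ ≤ LinearMap.ker dinv)
    (hpinv₂ : LinearMap.range dinv ≤ (LinearMap.ker d₀)ᗮ)
    (hpinv₃ : ∀ v : V, d₀ (dinv v) = (Submodule.orthogonalProjection (LinearMap.range d₀) v : V))
    (d : V →ₗ[ℝ] V) (hd : d ∘ₗ d = 0)
    (D : V →ₗ[ℝ] V) (hD : D = dinv ∘ₗ (d - d₀))
    (N : ℕ) (hDnil : D ^ (N + 1) = 0)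
    (P : V →ₗ[ℝ] V) (hP : P = ∑ k ∈ Finset.range (N + 1), ((-1 : ℝ)) ^ k • D ^ k)
    (Q : V →ₗ[ℝ] V) (hQ : Q = P ∘ₗ dinv)
    (PiE : V →ₗ[ℝ] V) (hPiE : PiE = LinearMap.id - Q ∘ₗ d - d ∘ₗ Q)
    (E E₀ : Submodule ℝ V)
    (hE : E = LinearMap.ker dinv ⊓ LinearMap.ker (dinv ∘ₗ d))
    (hE₀ : E₀ = LinearMap.ker d₀ ⊓ (LinearMap.range d₀)ᗮ)
    (PiE0 : V →ₗ[ℝ] V) (hPiE0 : PiE0 = LinearMap.id - dinv ∘ₗ d₀ - d₀ ∘ₗ dinv) :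
    PiE ∘ₗ PiE0 ∘ₗ PiE = PiE ∧
    PiE0 ∘ₗ PiE ∘ₗ PiE0 = PiE0 ∧
    (∀ x ∈ E, PiE0 x ∈ E₀) ∧
    (∀ x ∈ E₀, PiE x ∈ E) ∧
    (∀ x ∈ E, PiE (PiE0 x) = x) ∧
    (∀ x ∈ E₀, PiE0 (PiE x) = x) := by
  have hpi : IsPartialInverse_s13 d₀ dinv := ⟨hpinv₁, hpinv₂, hpinv₃⟩
  have hinv := hpi.mul_self_eq_zero hd₀
  have hidi := hpi.dinv_mul_d₀_mul_dinv
  have hdid := hpi.d₀_mul_dinv_mul_d₀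
  obtain rfl : D = dinv * (d - d₀) := hD
  have hPl : P * (1 + dinv * (d - d₀)) = 1 := hP ▸ sum_neg_one_pow_smul_pow_mul_one_add hDnil
  have hPr : (1 + dinv * (d - d₀)) * P = 1 := hP ▸ one_add_mul_sum_neg_one_pow_smul_pow hDnil
  obtain rfl : PiE = piE dinv d P := hPiE.trans (hQ ▸ rfl)
  obtain rfl : PiE0 = piE₀ d₀ dinv := hPiE0
  have maps_to_E (v : V) : piE dinv d P v ∈ E := hE ▸
    ⟨congr($(dinv_mul_piE_eq_zero hinv hidi hPr) v),
      congr($(dinv_mul_d_mul_piE_eq_zero hidi hPr hd) v)⟩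
  have maps_to_E₀ (v : V) : piE₀ d₀ dinv v ∈ E₀ := hE₀ ▸
    ⟨congr($(d₀_mul_piE₀_eq_zero hd₀ hdid) v), hpi.sub_sub_mem_orthogonal hd₀ v⟩
  have fixes_E (x : V) (hx : x ∈ E) : piE dinv d P x = x := by
    obtain ⟨hdinv, hdinv_d⟩ := hE ▸ hx
    simp [piE, mem_ker.mp hdinv, show dinv (d x) = 0 from hdinv_d]
  have fixes_E₀ (x : V) (hx : x ∈ E₀) : piE₀ d₀ dinv x = x := by
    obtain ⟨hd₀x, hx⟩ := hE₀ ▸ hx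
    simp [piE₀, mem_ker.mp hd₀x, mem_ker.mp (hpinv₁ hx)]
  have h₁ := piE_mul_piE₀_mul_piE hinv hidi hPl hPr hd
  have h₂ := piE₀_mul_piE_mul_piE₀ hinv hidi hPr hd₀ hdid
  refine ⟨h₁, h₂, fun x _ ↦ maps_to_E₀ x, fun x _ ↦ maps_to_E x, fun x hx ↦ ?_, fun x hx ↦ ?_⟩
  · conv_lhs => rw [← fixes_E x hx]
    exact congr($h₁ x).trans (fixes_E x hx)
  · conv_lhs => rw [← fixes_E₀ x hx]
    exact congr($h₂ x).trans (fixes_E₀ x hx)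
end

section
/- Let V be a finite-dimensional real inner product space, d₀ : V →ₗ[ℝ] V a linear map with adjoint δ₀, and let s : V ≃ₗᵢ[ℝ] V be a linear isometric equivalence together with signs ε, η ∈ {1, −1} such that s ∘ s = η • id and δ₀ = ε • (s ∘ d₀ ∘ s⁻¹). Then s maps E₀ := ker d₀ ∩ (range d₀)ᗮ onto itself: the image of E₀ under s equals E₀. (This is the abstract form of the paper's Hodge duality theorem ⋆E₀^h = E₀^{n−h}: the Hodge star ⋆ satisfies ⋆⋆ = ±id and intertwines the algebraic differential d_g with its formal adjoint δ_g = ±⋆d_g⋆, hence maps Rumin h-forms to Rumin (n−h)-forms.) -/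
theorem orth_range {V : Type*} [NormedAddCommGroup V] [InnerProductSpace ℝ V] [FiniteDimensional ℝ V]
    (d₀ : V →ₗ[ℝ] V) : (LinearMap.range d₀)ᗮ = LinearMap.ker (LinearMap.adjoint d₀) := by
  ext x
  simp only [Submodule.mem_orthogonal, LinearMap.mem_range, LinearMap.mem_ker,
    forall_exists_index]
  constructor
  · intro h
    rw [← @inner_self_eq_zero ℝ, LinearMap.adjoint_inner_right]
    exact h _ _ rfl
  · rintro h u v rfl
    rw [← LinearMap.adjoint_inner_right, h, inner_zero_right]

/-- (Hodge duality, abstract form.) Let `V` be a finite-dimensional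
real inner product space, `d₀` a linear map with adjoint `δ₀`, and `s` a linear isometric
equivalence with `s ∘ s = η • id` and `δ₀ = ε • (s ∘ d₀ ∘ s⁻¹)` for signs `ε, η ∈ {1, −1}`.
Then `s` maps `E₀ := ker d₀ ⊓ (range d₀)ᗮ` onto itself. -/
theorem hodge_star_preserves_E0
    {V : Type*} [NormedAddCommGroup V] [InnerProductSpace ℝ V] [FiniteDimensional ℝ V]
    (d₀ : V →ₗ[ℝ] V) (s : V ≃ₗᵢ[ℝ] V) (ε η : ℝ)
    (hε : ε = 1 ∨ ε = -1) (hη : η = 1 ∨ η = -1)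
    (hss : ∀ v : V, s (s v) = η • v)
    (hadj : LinearMap.adjoint d₀ =
      ε • ((s.toLinearEquiv : V →ₗ[ℝ] V) ∘ₗ d₀ ∘ₗ (s.symm.toLinearEquiv : V →ₗ[ℝ] V))) :
    Submodule.map (s.toLinearEquiv : V →ₗ[ℝ] V)
        (LinearMap.ker d₀ ⊓ (LinearMap.range d₀)ᗮ) =
      LinearMap.ker d₀ ⊓ (LinearMap.range d₀)ᗮ := by
  have hε0 : ε ≠ 0 := by rcases hε with h | h <;> rw [h] <;> norm_num
  have hη0 : η ≠ 0 := by rcases hη with h | h <;> rw [h] <;> norm_num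
  have hη2 : η * η = 1 := by rcases hη with h | h <;> rw [h] <;> norm_num
  rw [orth_range]
  have hadj' : ∀ u, LinearMap.adjoint d₀ u = ε • s (d₀ (s.symm u)) := by
    intro u; rw [hadj]; rfl
  have key : ∀ v, v ∈ LinearMap.ker d₀ ⊓ LinearMap.ker (LinearMap.adjoint d₀) →
      s v ∈ LinearMap.ker d₀ ⊓ LinearMap.ker (LinearMap.adjoint d₀) := by
    rintro v ⟨hv1, hv2⟩
    simp only [SetLike.mem_coe, LinearMap.mem_ker] at hv1 hv2
    constructor
    · simp only [SetLike.mem_coe, LinearMap.mem_ker]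
      have h1 : ε • s (d₀ (s.symm v)) = 0 := by rw [← hadj' v]; exact hv2
      have h2 : d₀ (s.symm v) = 0 := by
        rcases smul_eq_zero.mp h1 with h | h
        · exact absurd h hε0
        · exact s.injective (by simpa using h)
      have hsv : s v = η • s.symm v := by
        have := congrArg s.symm (hss v)
        simpa using this
      rw [hsv, map_smul, h2, smul_zero]
    · simp only [SetLike.mem_coe, LinearMap.mem_ker]; rw [hadj' (s v), s.symm_apply_apply, hv1, map_zero, smul_zero]
  apply le_antisymm
  · rintro x ⟨v, hv, rfl⟩
    exact key v hv
  · intro w hw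
    refine ⟨η • s w, Submodule.smul_mem _ _ (key w hw), ?_⟩
    show s (η • s w) = w
    rw [map_smul, hss w, smul_smul, hη2, one_smul]
end
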